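/- Let q, X, Y be complex numbers with |q| < 1, |X| < 1 and |Y| < 1. Then Σ_{r≥0} Σ_{s≥0} q^{rs} X^r Y^s / ((q;q)_r (q;q)_s) = ∏_{m≥0} (1 − q^m XY) / ((1 − q^m X)(1 − q^m Y)); both the double series and the infinite product converge absolutely. -/

import Mathlib

/-!
Summing over `s` first, Euler's series `∑ₛ wˢ / (q;q)ₛ = 1 / (w;q)_∞` (the case `a = 0` of the
q-binomial theorem) at `w = q^r Y`, together with `(Y;q)_∞ = (Y;q)_r (q^r Y;q)_∞`, turns the
double series into `(Y;q)_∞⁻¹ ∑_r (Y;q)_r / (q;q)_r X^r`, which Cauchy's q-binomial theorem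
evaluates to `(XY;q)_∞ / ((X;q)_∞ (Y;q)_∞)`, the limit of the partial products
`(XY;q)_n / ((X;q)_n (Y;q)_n)` of the infinite product.

The q-binomial theorem follows from the functional equation `(1 - z) F(z) = (1 - a z) F(q z)` of
`F(z) = ∑ (a;q)_n / (q;q)_n zⁿ`: iterating it gives `F(z) (z;q)_n = (az;q)_n F(qⁿ z)`, and
`F(qⁿ z) → F(0) = 1` by dominated convergence, the coefficients being bounded since they converge
to `(a;q)_∞ / (q;q)_∞`.
-/

open Finset Filter Topology Asymptotics

section QPochhammer

variable {𝕜 : Type*} [NormedField 𝕜] {a q z X Y : 𝕜}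

def qPochhammer (a q : 𝕜) (n : ℕ) : 𝕜 := ∏ k ∈ range n, (1 - a * q ^ k)

noncomputable def qPochhammerInf (a q : 𝕜) : 𝕜 := ∏' k, (1 - a * q ^ k)

def qBinomialSeriesCoeff (a q : 𝕜) (n : ℕ) : 𝕜 := qPochhammer a q n / qPochhammer q q n

noncomputable def qBinomialSeries (a q z : 𝕜) : 𝕜 := ∑' n, qBinomialSeriesCoeff a q n * z ^ n

@[simp]
lemma qPochhammer_zero_left (q : 𝕜) (n : ℕ) : qPochhammer 0 q n = 1 := by
  simp [qPochhammer]

@[simp]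
lemma qPochhammerInf_zero_left (q : 𝕜) : qPochhammerInf 0 q = 1 := by
  simp [qPochhammerInf]

lemma qPochhammer_succ (a q : 𝕜) (n : ℕ) :
    qPochhammer a q (n + 1) = qPochhammer a q n * (1 - a * q ^ n) :=
  prod_range_succ _ n

lemma prod_Icc_one_sub_pow_eq_qPochhammer (q : 𝕜) (n : ℕ) :
    ∏ k ∈ Icc 1 n, (1 - q ^ k) = qPochhammer q q n := by
  rw [← Ico_add_one_right_eq_Icc, prod_Ico_eq_prod_range, qPochhammer, Nat.add_sub_cancel]
  simp only [pow_add, pow_one, add_comm 1, mul_comm]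

lemma norm_pow_mul_le (hq : ‖q‖ ≤ 1) (n : ℕ) (z : 𝕜) : ‖q ^ n * z‖ ≤ ‖z‖ := by
  rw [norm_mul, norm_pow]
  exact mul_le_of_le_one_left (norm_nonneg z) (pow_le_one₀ (norm_nonneg q) hq)

lemma norm_mul_pow_lt_one (ha : ‖a‖ < 1) (hq : ‖q‖ ≤ 1) (k : ℕ) : ‖a * q ^ k‖ < 1 := by
  rw [mul_comm]
  exact (norm_pow_mul_le hq k a).trans_lt ha

lemma one_sub_ne_zero_of_norm_lt_one {x : 𝕜} (hx : ‖x‖ < 1) : 1 - x ≠ 0 := by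
  rw [sub_ne_zero]
  rintro rfl
  simp at hx

lemma qPochhammer_ne_zero (ha : ‖a‖ < 1) (hq : ‖q‖ ≤ 1) (n : ℕ) : qPochhammer a q n ≠ 0 :=
  prod_ne_zero_iff.2 fun k _ ↦ one_sub_ne_zero_of_norm_lt_one (norm_mul_pow_lt_one ha hq k)

lemma summable_norm_mul_pow (a : 𝕜) (hq : ‖q‖ < 1) : Summable fun k ↦ ‖a * q ^ k‖ := by
  simpa [norm_mul, norm_pow] using
    (summable_geometric_of_lt_one (norm_nonneg q) hq).mul_left ‖a‖

@[simp]
lemma qBinomialSeriesCoeff_zero (a q : 𝕜) : qBinomialSeriesCoeff a q 0 = 1 := by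
  simp [qBinomialSeriesCoeff, qPochhammer]

lemma qBinomialSeriesCoeff_succ_mul (a : 𝕜) (hq : ‖q‖ < 1) (n : ℕ) :
    qBinomialSeriesCoeff a q (n + 1) * (1 - q ^ (n + 1)) =
      qBinomialSeriesCoeff a q n * (1 - a * q ^ n) := by
  have hn := qPochhammer_ne_zero hq hq.le n
  have hqn : 1 - q ^ (n + 1) ≠ 0 := one_sub_ne_zero_of_norm_lt_one <| by
    rw [norm_pow]; exact pow_lt_one₀ (norm_nonneg q) hq n.succ_ne_zero
  rw [qBinomialSeriesCoeff, qBinomialSeriesCoeff, qPochhammer_succ, qPochhammer_succ, ← pow_succ']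
  field_simp

lemma summable_norm_ratio_factor_sub_one (hq : ‖q‖ < 1) (hX : ‖X‖ < 1) (hY : ‖Y‖ < 1) :
    Summable fun m : ℕ ↦
      ‖(1 - q ^ m * (X * Y)) / ((1 - q ^ m * X) * (1 - q ^ m * Y)) - 1‖ := by
  set h : ℕ → 𝕜 := fun m ↦
    (X + Y - X * Y - q ^ m * (X * Y)) / ((1 - q ^ m * X) * (1 - q ^ m * Y))
  have hq0 := tendsto_pow_atTop_nhds_zero_of_norm_lt_one hq
  have hlim : Tendsto h atTop
      (𝓝 ((X + Y - X * Y - 0 * (X * Y)) / ((1 - 0 * X) * (1 - 0 * Y)))) :=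
    (tendsto_const_nhds.sub (hq0.mul_const _)).div
      ((tendsto_const_nhds.sub (hq0.mul_const _)).mul (tendsto_const_nhds.sub (hq0.mul_const _)))
      (by simp)
  have heq (m : ℕ) :
      (1 - q ^ m * (X * Y)) / ((1 - q ^ m * X) * (1 - q ^ m * Y)) - 1 = q ^ m * h m := by
    have := one_sub_ne_zero_of_norm_lt_one ((norm_pow_mul_le hq.le m X).trans_lt hX)
    have := one_sub_ne_zero_of_norm_lt_one ((norm_pow_mul_le hq.le m Y).trans_lt hY)
    simp only [h]
    field_simp
    ring
  simp_rw [heq]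
  refine summable_of_isBigO_nat (summable_geometric_of_lt_one (norm_nonneg q) hq) ?_
  simpa using
    ((isBigO_refl (fun m ↦ q ^ m) atTop).mul (hlim.isBigO_one 𝕜)).norm_left.norm_right

variable [CompleteSpace 𝕜]

lemma multipliable_one_sub_mul_pow (a : 𝕜) (hq : ‖q‖ < 1) :
    Multipliable fun k ↦ 1 - a * q ^ k := by
  simp_rw [sub_eq_add_neg]
  exact multipliable_one_add_of_summable (by simpa using summable_norm_mul_pow a hq)

lemma tendsto_qPochhammer (a : 𝕜) (hq : ‖q‖ < 1) :
    Tendsto (qPochhammer a q) atTop (𝓝 (qPochhammerInf a q)) :=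
  (multipliable_one_sub_mul_pow a hq).hasProd.tendsto_prod_nat

lemma qPochhammerInf_ne_zero (ha : ‖a‖ < 1) (hq : ‖q‖ < 1) : qPochhammerInf a q ≠ 0 := by
  simp_rw [qPochhammerInf, sub_eq_add_neg]
  refine tprod_one_add_ne_zero_of_summable (fun k ↦ ?_)
    (by simpa using summable_norm_mul_pow a hq)
  rw [← sub_eq_add_neg]
  exact one_sub_ne_zero_of_norm_lt_one (norm_mul_pow_lt_one ha hq.le k)

lemma qPochhammer_mul_qPochhammerInf (a : 𝕜) (hq : ‖q‖ < 1) (n : ℕ) :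
    qPochhammer a q n * qPochhammerInf (a * q ^ n) q = qPochhammerInf a q := by
  have hshift : HasProd (fun k ↦ 1 - a * q ^ (k + n)) (qPochhammerInf (a * q ^ n) q) :=
    (multipliable_one_sub_mul_pow (a * q ^ n) hq).hasProd.congr_fun fun k ↦ by ring
  exact (HasProd.prod_range_mul (f := fun k ↦ 1 - a * q ^ k) hshift).tprod_eq.symm

lemma exists_norm_qBinomialSeriesCoeff_le (a : 𝕜) (hq : ‖q‖ < 1) :
    ∃ C, ∀ n, ‖qBinomialSeriesCoeff a q n‖ ≤ C := by
  have hlim := (tendsto_qPochhammer a hq).div (tendsto_qPochhammer q hq)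
    (qPochhammerInf_ne_zero hq hq)
  obtain ⟨C, hC⟩ := (Metric.isBounded_range_of_tendsto _ hlim).exists_norm_le
  exact ⟨C, fun n ↦ hC _ ⟨n, rfl⟩⟩

lemma summable_norm_qBinomialSeriesCoeff_mul_pow (a : 𝕜) (hq : ‖q‖ < 1) (hz : ‖z‖ < 1) :
    Summable fun n ↦ ‖qBinomialSeriesCoeff a q n * z ^ n‖ := by
  obtain ⟨C, hC⟩ := exists_norm_qBinomialSeriesCoeff_le a hq
  refine .of_nonneg_of_le (fun _ ↦ norm_nonneg _) (fun n ↦ ?_)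
    ((summable_geometric_of_lt_one (norm_nonneg z) hz).mul_left C)
  rw [norm_mul, norm_pow]
  exact mul_le_mul_of_nonneg_right (hC n) (by positivity)

lemma qBinomialSeries_functional_eq (a : 𝕜) (hq : ‖q‖ < 1) (hz : ‖z‖ < 1) :
    (1 - z) * qBinomialSeries a q z = (1 - a * z) * qBinomialSeries a q (q * z) := by
  have hqz : ‖q * z‖ < 1 := by simpa using (norm_pow_mul_le hq.le 1 z).trans_lt hz
  have S₁ := (summable_norm_qBinomialSeriesCoeff_mul_pow a hq hz).of_norm
  have S₂ := (summable_norm_qBinomialSeriesCoeff_mul_pow a hq hqz).of_norm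
  have S₃ : Summable fun n ↦ qBinomialSeriesCoeff a q n * (1 - q ^ n) * z ^ n :=
    (S₁.sub S₂).congr fun n ↦ by ring
  have hdiff : qBinomialSeries a q z - qBinomialSeries a q (q * z) =
      ∑' n, qBinomialSeriesCoeff a q n * (1 - q ^ n) * z ^ n := by
    rw [qBinomialSeries, qBinomialSeries, ← S₁.tsum_sub S₂]
    exact tsum_congr fun n ↦ by ring
  have hshift : ∑' n, qBinomialSeriesCoeff a q n * (1 - q ^ n) * z ^ n =
      z * (qBinomialSeries a q z - a * qBinomialSeries a q (q * z)) := by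
    rw [S₃.tsum_eq_zero_add, qBinomialSeries, qBinomialSeries, ← tsum_mul_left,
      ← S₁.tsum_sub (S₂.mul_left a), ← tsum_mul_left]
    simp only [pow_zero, sub_self, mul_zero, zero_mul, zero_add]
    refine tsum_congr fun n ↦ ?_
    linear_combination z ^ (n + 1) * qBinomialSeriesCoeff_succ_mul a hq n
  linear_combination hdiff.trans hshift

lemma tendsto_qBinomialSeries_pow_mul (a : 𝕜) (hq : ‖q‖ < 1) (hz : ‖z‖ < 1) :
    Tendsto (fun n ↦ qBinomialSeries a q (q ^ n * z)) atTop (𝓝 1) := by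
  obtain ⟨C, hC⟩ := exists_norm_qBinomialSeriesCoeff_le a hq
  have hq0 := (tendsto_pow_atTop_nhds_zero_of_norm_lt_one hq).mul_const z
  rw [zero_mul] at hq0
  have hsum : ∑' k, qBinomialSeriesCoeff a q k * 0 ^ k = 1 := by
    rw [tsum_eq_single 0 fun k hk ↦ by simp [hk]]
    simp
  rw [← hsum]
  refine tendsto_tsum_of_dominated_convergence
    ((summable_geometric_of_lt_one (norm_nonneg z) hz).mul_left C)
    (fun k ↦ (hq0.pow k).const_mul _) (Eventually.of_forall fun n k ↦ ?_)
  rw [norm_mul, norm_pow]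
  exact mul_le_mul (hC k) (pow_le_pow_left₀ (norm_nonneg _) (norm_pow_mul_le hq.le n z) k)
    (by positivity) ((norm_nonneg _).trans (hC k))

lemma qBinomialSeries_mul_qPochhammer (a : 𝕜) (hq : ‖q‖ < 1) (hz : ‖z‖ < 1) (n : ℕ) :
    qBinomialSeries a q z * qPochhammer z q n =
      qPochhammer (a * z) q n * qBinomialSeries a q (q ^ n * z) := by
  induction n with
  | zero => simp [qPochhammer]
  | succ n ih =>
    have h := qBinomialSeries_functional_eq a hq ((norm_pow_mul_le hq.le n z).trans_lt hz)
    rw [qPochhammer_succ, qPochhammer_succ, ← mul_assoc, ih, pow_succ', mul_assoc q]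
    linear_combination qPochhammer (a * z) q n * h

theorem hasSum_qBinomial (a : 𝕜) (hq : ‖q‖ < 1) (hz : ‖z‖ < 1) :
    HasSum (fun n ↦ qBinomialSeriesCoeff a q n * z ^ n)
      (qPochhammerInf (a * z) q / qPochhammerInf z q) := by
  have hlim₁ := (tendsto_qPochhammer z hq).const_mul (qBinomialSeries a q z)
  have hlim₂ := (tendsto_qPochhammer (a * z) hq).mul (tendsto_qBinomialSeries_pow_mul a hq hz)
  simp_rw [← qBinomialSeries_mul_qPochhammer a hq hz, mul_one] at hlim₂
  rw [← (eq_div_iff (qPochhammerInf_ne_zero hz hq)).2 (tendsto_nhds_unique hlim₁ hlim₂)]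
  exact (summable_norm_qBinomialSeriesCoeff_mul_pow a hq hz).of_norm.hasSum

lemma summable_norm_pow_div_qPochhammer (hq : ‖q‖ < 1) (hz : ‖z‖ < 1) :
    Summable fun n ↦ ‖z ^ n / qPochhammer q q n‖ := by
  simpa [qBinomialSeriesCoeff, div_eq_inv_mul] using
    summable_norm_qBinomialSeriesCoeff_mul_pow 0 hq hz

lemma summable_norm_double_series (hq : ‖q‖ < 1) (hX : ‖X‖ < 1) (hY : ‖Y‖ < 1) :
    Summable fun p : ℕ × ℕ ↦
      ‖q ^ (p.1 * p.2) * X ^ p.1 * Y ^ p.2 / (qPochhammer q q p.1 * qPochhammer q q p.2)‖ := by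
  refine .of_nonneg_of_le (fun _ ↦ norm_nonneg _) (fun p ↦ ?_)
    ((summable_norm_pow_div_qPochhammer hq hX).mul_norm (summable_norm_pow_div_qPochhammer hq hY))
  rw [show q ^ (p.1 * p.2) * X ^ p.1 * Y ^ p.2 / (qPochhammer q q p.1 * qPochhammer q q p.2) =
      q ^ (p.1 * p.2) * (X ^ p.1 / qPochhammer q q p.1 * (Y ^ p.2 / qPochhammer q q p.2)) by ring,
    norm_mul, norm_mul]
  exact mul_le_of_le_one_left (by positivity) (by simpa using pow_le_one₀ (norm_nonneg q) hq.le)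

lemma hasSum_double_series_fiber (hq : ‖q‖ < 1) (hY : ‖Y‖ < 1) (X : 𝕜) (r : ℕ) :
    HasSum (fun s ↦ q ^ (r * s) * X ^ r * Y ^ s / (qPochhammer q q r * qPochhammer q q s))
      (qBinomialSeriesCoeff Y q r * X ^ r / qPochhammerInf Y q) := by
  have hYr : ‖Y * q ^ r‖ < 1 := norm_mul_pow_lt_one hY hq.le r
  have h := (hasSum_qBinomial 0 hq hYr).mul_left (X ^ r / qPochhammer q q r)
  simp only [zero_mul, qPochhammerInf_zero_left, qBinomialSeriesCoeff, qPochhammer_zero_left] at h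
  have hvalue : X ^ r / qPochhammer q q r * (1 / qPochhammerInf (Y * q ^ r) q) =
      qBinomialSeriesCoeff Y q r * X ^ r / qPochhammerInf Y q := by
    have := qPochhammer_ne_zero hY hq.le r
    have := qPochhammerInf_ne_zero hYr hq
    rw [← qPochhammer_mul_qPochhammerInf Y hq r, qBinomialSeriesCoeff]
    field_simp
  rw [← hvalue]
  exact h.congr_fun fun s ↦ by ring

theorem hasSum_double_series (hq : ‖q‖ < 1) (hX : ‖X‖ < 1) (hY : ‖Y‖ < 1) :
    HasSum (fun p : ℕ × ℕ ↦
        q ^ (p.1 * p.2) * X ^ p.1 * Y ^ p.2 / (qPochhammer q q p.1 * qPochhammer q q p.2))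
      (qPochhammerInf (X * Y) q / (qPochhammerInf X q * qPochhammerInf Y q)) := by
  have hsum := (summable_norm_double_series hq hX hY).of_norm.hasSum
  have houter := (hasSum_qBinomial Y hq hX).div_const (qPochhammerInf Y q)
  have htsum := (hsum.prod_fiberwise (hasSum_double_series_fiber hq hY X)).unique houter
  rwa [htsum, mul_comm Y, div_div] at hsum

theorem hasProd_ratio_factor (hq : ‖q‖ < 1) (hX : ‖X‖ < 1) (hY : ‖Y‖ < 1) :
    HasProd (fun m : ℕ ↦ (1 - q ^ m * (X * Y)) / ((1 - q ^ m * X) * (1 - q ^ m * Y)))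
      (qPochhammerInf (X * Y) q / (qPochhammerInf X q * qPochhammerInf Y q)) := by
  have hmul : Multipliable fun m : ℕ ↦
      (1 - q ^ m * (X * Y)) / ((1 - q ^ m * X) * (1 - q ^ m * Y)) := by
    simpa using multipliable_one_add_of_summable
      (f := fun m ↦ (1 - q ^ m * (X * Y)) / ((1 - q ^ m * X) * (1 - q ^ m * Y)) - 1)
      (summable_norm_ratio_factor_sub_one hq hX hY)
  have hlim := (tendsto_qPochhammer (X * Y) hq).div
    ((tendsto_qPochhammer X hq).mul (tendsto_qPochhammer Y hq))
    (mul_ne_zero (qPochhammerInf_ne_zero hX hq) (qPochhammerInf_ne_zero hY hq))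
  have hpartial (n : ℕ) : ∏ m ∈ range n,
      (1 - q ^ m * (X * Y)) / ((1 - q ^ m * X) * (1 - q ^ m * Y)) =
        qPochhammer (X * Y) q n / (qPochhammer X q n * qPochhammer Y q n) := by
    simp only [qPochhammer, prod_div_distrib, prod_mul_distrib, mul_comm (q ^ _)]
  rw [← tendsto_nhds_unique hmul.hasProd.tendsto_prod_nat
    (hlim.congr fun n ↦ (hpartial n).symm)]
  exact hmul.hasProd

end QPochhammer

/-- For complex `q, X, Y` with `|q| < 1`, `|X| < 1`, `|Y| < 1`:
`Σ_{r,s≥0} q^{rs} X^r Y^s /((q;q)_r (q;q)_s) = ∏_{m≥0} (1 - qᵐXY)/((1 - qᵐX)(1 - qᵐY))`;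
the double series converges absolutely, as does the infinite product. -/
theorem stmt7 (q X Y : ℂ) (hq : ‖q‖ < 1) (hX : ‖X‖ < 1) (hY : ‖Y‖ < 1) :
    Summable (fun p : ℕ × ℕ =>
      ‖q ^ (p.1 * p.2) * X ^ p.1 * Y ^ p.2 /
        ((∏ k ∈ Finset.Icc 1 p.1, (1 - q ^ k)) * ∏ k ∈ Finset.Icc 1 p.2, (1 - q ^ k))‖) ∧
    Summable (fun m : ℕ =>
      ‖(1 - q ^ m * (X * Y)) / ((1 - q ^ m * X) * (1 - q ^ m * Y)) - 1‖) ∧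
    ∑' p : ℕ × ℕ,
        q ^ (p.1 * p.2) * X ^ p.1 * Y ^ p.2 /
          ((∏ k ∈ Finset.Icc 1 p.1, (1 - q ^ k)) * ∏ k ∈ Finset.Icc 1 p.2, (1 - q ^ k))
      = ∏' m : ℕ, (1 - q ^ m * (X * Y)) / ((1 - q ^ m * X) * (1 - q ^ m * Y)) := by
  simp only [prod_Icc_one_sub_pow_eq_qPochhammer]
  exact ⟨summable_norm_double_series hq hX hY, summable_norm_ratio_factor_sub_one hq hX hY,
    (hasSum_double_series hq hX hY).tsum_eq.trans (hasProd_ratio_factor hq hX hY).tprod_eq.symm⟩
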